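/- arXiv:1805.05054 — 5 statements merged into one kernel-verified Lean document; each statement's English description precedes it below -/
import Mathlib

section
/- Let λ be a probability measure on a measurable space E and h : E → ℝ a measurable function with ∫ e^h dλ < ∞. Then log ∫ e^h dλ = sup over probability measures ρ on E of { ∫ h dρ − KL(ρ, λ) }, with the convention ∞ − ∞ = −∞. -/
open MeasureTheory Classical

/-- Kullback–Leibler divergence, `+∞` if `ρ` is not absolutely continuous w.r.t. `λ`
(or if the log-likelihood ratio is not integrable). -/

noncomputable def klDiv' {E : Type*} [MeasurableSpace E] (ρ lam : Measure E) : EReal :=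
  if ρ ≪ lam ∧ Integrable (llr ρ lam) ρ then ((∫ x, llr ρ lam x ∂ρ : ℝ) : EReal) else ⊤

/-!
For `ρ ≪ λ`, `∫ h dρ - KL(ρ, λ) = log ∫ e^h dλ - KL(ρ, λ^h)`, where `λ^h = e^h λ / ∫ e^h dλ` is
the tilted (Gibbs) measure, so Gibbs' inequality `KL(ρ, λ^h) ≥ 0` bounds the supremum by
`log ∫ e^h dλ`. The bound would be attained at `ρ = λ^h`, but `h` need not be `λ^h`-integrable;
tilting `λ` restricted to `{|h| ≤ n}` instead gives a competitor with value
`log ∫_{|h| ≤ n} e^h dλ`, which tends to `log ∫ e^h dλ` as `n → ∞`.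
-/

open Real Set Filter Topology

section

variable {E : Type*} [MeasurableSpace E] {ρ lam : Measure E} {h : E → ℝ}

lemma integral_llr_nonneg [IsProbabilityMeasure ρ] [IsProbabilityMeasure lam] (hρ : ρ ≪ lam)
    (hllr : Integrable (llr ρ lam) ρ) : 0 ≤ ∫ x, llr ρ lam x ∂ρ := by
  simpa using InformationTheory.integral_llr_add_sub_measure_univ_nonneg hρ hllr

lemma integral_sub_integral_llr_le_log_integral_exp [IsProbabilityMeasure ρ] [SigmaFinite lam]
    (hρ : ρ ≪ lam) (hh : Integrable h ρ) (hllr : Integrable (llr ρ lam) ρ)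
    (hexp : Integrable (fun x ↦ exp (h x)) lam) :
    ∫ x, h x ∂ρ - ∫ x, llr ρ lam x ∂ρ ≤ log (∫ x, exp (h x) ∂lam) := by
  have : NeZero lam := ⟨fun h0 ↦ IsProbabilityMeasure.ne_zero ρ (by simpa [h0] using hρ)⟩
  have : IsProbabilityMeasure (lam.tilted h) := isProbabilityMeasure_tilted hexp
  have hgibbs := integral_llr_nonneg (hρ.trans (absolutelyContinuous_tilted hexp))
    (integrable_llr_tilted_right hρ hh hllr hexp)
  rw [integral_llr_tilted_right hρ hh hexp hllr] at hgibbs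
  linarith

lemma coe_integral_sub_klDiv'_le [IsProbabilityMeasure ρ] [SigmaFinite lam]
    (hh : Integrable h ρ) (hexp : Integrable (fun x ↦ exp (h x)) lam) :
    ((∫ x, h x ∂ρ : ℝ) : EReal) - klDiv' ρ lam ≤ (log (∫ x, exp (h x) ∂lam) : EReal) := by
  unfold klDiv'
  split_ifs with hkl
  · exact_mod_cast integral_sub_integral_llr_le_log_integral_exp hkl.1 hh hkl.2 hexp
  · simp

lemma llr_restrict_self_ae_eq_zero [SigmaFinite lam] {s : Set E} (hs : MeasurableSet s) :
    llr (lam.restrict s) lam =ᵐ[lam.restrict s] 0 := by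
  filter_upwards [ae_restrict_of_ae (Measure.rnDeriv_restrict_self lam hs), ae_restrict_mem hs]
    with x hx hxs
  simp [llr, hx, hxs]

lemma llr_tilted_restrict_ae_eq [SigmaFinite lam] {s : Set E} (hs : MeasurableSet s)
    (hmeas : Measurable h) (hexp : IntegrableOn (fun x ↦ exp (h x)) s lam) :
    llr ((lam.restrict s).tilted h) lam =ᵐ[(lam.restrict s).tilted h]
      fun x ↦ h x - log (∫ x in s, exp (h x) ∂lam) := by
  refine (tilted_absolutelyContinuous _ _).ae_le ?_
  filter_upwards [llr_tilted_left Measure.restrict_le_self.absolutelyContinuous hexp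
    hmeas.aemeasurable, llr_restrict_self_ae_eq_zero hs] with x hx hx0
  simp [hx, hx0]

lemma isProbabilityMeasure_tilted_restrict {s : Set E} (hpos : 0 < ∫ x in s, exp (h x) ∂lam) :
    IsProbabilityMeasure ((lam.restrict s).tilted h) := by
  have : NeZero (lam.restrict s) := ⟨fun h0 ↦ by simp [h0] at hpos⟩
  exact isProbabilityMeasure_tilted (Integrable.of_integral_ne_zero hpos.ne')

lemma integrable_tilted_restrict_of_abs_le {s : Set E} (hs : MeasurableSet s) {C : ℝ}
    (hC : ∀ x ∈ s, |h x| ≤ C) (hmeas : Measurable h) :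
    Integrable h ((lam.restrict s).tilted h) := by
  refine Integrable.of_bound hmeas.aestronglyMeasurable C ?_
  filter_upwards [(tilted_absolutelyContinuous _ _).ae_le (ae_restrict_mem hs)] with x hx
  exact hC x hx

lemma coe_integral_sub_klDiv'_tilted_restrict [SigmaFinite lam] {s : Set E}
    (hs : MeasurableSet s) {C : ℝ} (hC : ∀ x ∈ s, |h x| ≤ C) (hmeas : Measurable h)
    (hpos : 0 < ∫ x in s, exp (h x) ∂lam) :
    ((∫ x, h x ∂(lam.restrict s).tilted h : ℝ) : EReal) - klDiv' ((lam.restrict s).tilted h) lam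
      = (log (∫ x in s, exp (h x) ∂lam) : EReal) := by
  have := isProbabilityMeasure_tilted_restrict hpos
  have hh := integrable_tilted_restrict_of_abs_le hs hC hmeas (lam := lam)
  have hllr := llr_tilted_restrict_ae_eq hs hmeas (Integrable.of_integral_ne_zero hpos.ne')
  have hac : (lam.restrict s).tilted h ≪ lam :=
    (tilted_absolutelyContinuous _ _).trans Measure.restrict_le_self.absolutelyContinuous
  rw [klDiv', if_pos ⟨hac, (hh.sub (integrable_const _)).congr hllr.symm⟩,
    integral_congr_ae hllr, integral_sub hh (integrable_const _)]
  norm_cast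
  simp

lemma tendsto_setIntegral_abs_le_nat {μ : Measure E} {f : E → ℝ} (hf : Integrable f μ)
    (hmeas : Measurable h) :
    Tendsto (fun n : ℕ ↦ ∫ x in {x | |h x| ≤ n}, f x ∂μ) atTop (𝓝 (∫ x, f x ∂μ)) := by
  have hunion : ⋃ n : ℕ, {x | |h x| ≤ n} = univ :=
    eq_univ_of_forall fun x ↦ mem_iUnion.2 (exists_nat_ge |h x|)
  have hmono : Monotone fun n : ℕ ↦ {x | |h x| ≤ n} :=
    fun m n hmn x (hx : |h x| ≤ m) ↦ hx.trans (Nat.cast_le.2 hmn)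
  simpa [hunion] using tendsto_setIntegral_of_monotone
    (fun n ↦ measurableSet_le hmeas.abs measurable_const) hmono (hunion ▸ hf.integrableOn)

end

/-- Donsker–Varadhan variational formula:
`log ∫ e^h dλ = sup_ρ { ∫ h dρ − KL(ρ,λ) }` over probability measures `ρ`,
with the convention `∞ − ∞ = −∞`. -/
theorem donsker_varadhan {E : Type*} [MeasurableSpace E]
    (lam : Measure E) [IsProbabilityMeasure lam]
    (h : E → ℝ) (hmeas : Measurable h)
    (hint : Integrable (fun x => Real.exp (h x)) lam) :
    (Real.log (∫ x, Real.exp (h x) ∂lam) : EReal)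
      = ⨆ (ρ : Measure E) (_ : IsProbabilityMeasure ρ) (_ : Integrable h ρ),
          (((∫ x, h x ∂ρ : ℝ) : EReal) - klDiv' ρ lam) := by
  refine le_antisymm ?_ (iSup_le fun ρ ↦ iSup_le fun _ ↦ iSup_le fun hh ↦
    coe_integral_sub_klDiv'_le hh hint)
  have hZ := integral_exp_pos hint
  have htend := tendsto_setIntegral_abs_le_nat hint hmeas
  refine le_of_tendsto ((continuous_coe_real_ereal.tendsto _).comp
    ((continuousAt_log hZ.ne').tendsto.comp htend)) ?_
  filter_upwards [htend.eventually (eventually_gt_nhds hZ)] with n hn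
  have hs : MeasurableSet {x | |h x| ≤ n} := measurableSet_le hmeas.abs measurable_const
  have := isProbabilityMeasure_tilted_restrict hn
  rw [Function.comp_apply, Function.comp_apply,
    ← coe_integral_sub_klDiv'_tilted_restrict hs (fun x hx ↦ hx) hmeas hn]
  exact le_iSup₂_of_le _ this <| le_iSup_of_le
    (integrable_tilted_restrict_of_abs_le hs (fun x hx ↦ hx) hmeas) le_rfl
end

section
/- Let λ be a probability measure on a measurable space E and h : E → ℝ a measurable function with ∫ e^h dλ < ∞ and h bounded above on the support of λ. Then the supremum in the Donsker–Varadhan formula sup_ρ { ∫ h dρ − KL(ρ, λ) } is attained by the Gibbs measure λ_h defined by dλ_h/dλ = e^h / ∫ e^h dλ. -/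
open MeasureTheory Classical

/-!
The Gibbs measure is the tilted measure `λ.tilted h`, whose log-likelihood ratio against `λ` is
`h - log Z` with `Z = ∫ e^h dλ`. Hence `∫ h dλ_h - KL(λ_h, λ) = log Z`, once `h` is
`λ_h`-integrable, which is where the upper bound on `h` enters (`|x| e^x` is bounded on
`(-∞, M]`). Conversely, for every `ρ` the chain rule `KL(ρ, λ_h) = KL(ρ, λ) - ∫ h dρ + log Z`
and Gibbs' inequality `KL(ρ, λ_h) ≥ 0` give `∫ h dρ - KL(ρ, λ) ≤ log Z`.
-/

open Real

lemma abs_mul_exp_le_of_le {x M : ℝ} (hx : x ≤ M) :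
    |x| * exp x ≤ exp (-1) + |M| * exp M := by
  rcases le_or_gt x 0 with hneg | hpos
  · have hlin : -x ≤ exp (-x - 1) := by linarith [add_one_le_exp (-x - 1)]
    calc |x| * exp x = -x * exp x := by rw [abs_of_nonpos hneg]
      _ ≤ exp (-x - 1) * exp x := by gcongr
      _ = exp (-1) := by rw [← exp_add]; ring_nf
      _ ≤ exp (-1) + |M| * exp M := le_add_of_nonneg_right (by positivity)
  · calc |x| * exp x ≤ |M| * exp M := by gcongr
      _ ≤ exp (-1) + |M| * exp M := le_add_of_nonneg_left (exp_pos _).le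

section Tilted

variable {α : Type*} [MeasurableSpace α] {μ : Measure α} {f : α → ℝ}

lemma integrable_tilted_self_of_ae_le [IsFiniteMeasure μ] (hf : Integrable (fun x ↦ exp (f x)) μ)
    {M : ℝ} (hM : ∀ᵐ x ∂μ, f x ≤ M) : Integrable f (μ.tilted f) := by
  rw [integrable_tilted_iff hf]
  have hf_meas : AEMeasurable f μ := aemeasurable_of_aemeasurable_exp hf.1.aemeasurable
  refine Integrable.mono' (integrable_const (exp (-1) + |M| * exp M))
    (hf.1.smul hf_meas.aestronglyMeasurable) ?_
  filter_upwards [hM] with x hx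
  rw [smul_eq_mul, norm_mul, norm_of_nonneg (exp_pos _).le, norm_eq_abs, mul_comm]
  exact abs_mul_exp_le_of_le hx

lemma llr_tilted_self_ae_eq [SigmaFinite μ] (hf : Integrable (fun x ↦ exp (f x)) μ) :
    llr (μ.tilted f) μ =ᵐ[μ.tilted f] fun x ↦ f x - log (∫ x, exp (f x) ∂μ) :=
  (tilted_absolutelyContinuous μ f).ae_le (log_rnDeriv_tilted_left_self hf)

lemma klDiv'_tilted_self [SigmaFinite μ] [NeZero μ] (hf : Integrable (fun x ↦ exp (f x)) μ)
    (hf_tilted : Integrable f (μ.tilted f)) :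
    klDiv' (μ.tilted f) μ = ((∫ x, f x ∂μ.tilted f - log (∫ x, exp (f x) ∂μ) : ℝ) : EReal) := by
  have := isProbabilityMeasure_tilted hf
  have hllr := llr_tilted_self_ae_eq hf
  have hllr_int : Integrable (llr (μ.tilted f) μ) (μ.tilted f) :=
    (integrable_congr hllr).mpr (hf_tilted.sub (integrable_const _))
  rw [klDiv', if_pos ⟨tilted_absolutelyContinuous μ f, hllr_int⟩, integral_congr_ae hllr,
    integral_sub hf_tilted (integrable_const _), integral_const, probReal_univ, one_smul]

lemma integral_sub_klDiv'_le_log_integral_exp [SigmaFinite μ] [NeZero μ]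
    (hf : Integrable (fun x ↦ exp (f x)) μ) (ρ : Measure α) [IsProbabilityMeasure ρ]
    (hfρ : Integrable f ρ) :
    ((∫ x, f x ∂ρ : ℝ) : EReal) - klDiv' ρ μ ≤ ((log (∫ x, exp (f x) ∂μ) : ℝ) : EReal) := by
  by_cases hρμ : ρ ≪ μ ∧ Integrable (llr ρ μ) ρ
  · obtain ⟨hac, hllr⟩ := hρμ
    have := isProbabilityMeasure_tilted hf
    have gibbs := InformationTheory.integral_llr_add_sub_measure_univ_nonneg
      (hac.trans (absolutelyContinuous_tilted hf)) (integrable_llr_tilted_right hac hfρ hllr hf)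
    rw [integral_llr_tilted_right hac hfρ hf hllr, probReal_univ, probReal_univ] at gibbs
    rw [klDiv', if_pos ⟨hac, hllr⟩, ← EReal.coe_sub, EReal.coe_le_coe_iff]
    linarith
  · rw [klDiv', if_neg hρμ, EReal.sub_top]
    exact bot_le

end Tilted

theorem donsker_varadhan_attained_general {E : Type*} [MeasurableSpace E]
    (lam : Measure E) [IsProbabilityMeasure lam]
    (h : E → ℝ)
    (hint : Integrable (fun x => Real.exp (h x)) lam)
    (hbdd : ∃ M : ℝ, ∀ᵐ x ∂lam, h x ≤ M) :
    let lamh : Measure E :=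
      lam.withDensity (fun x => ENNReal.ofReal (Real.exp (h x) / ∫ y, Real.exp (h y) ∂lam))
    (((∫ x, h x ∂lamh : ℝ) : EReal) - klDiv' lamh lam)
      = ⨆ (ρ : Measure E) (_ : IsProbabilityMeasure ρ) (_ : Integrable h ρ),
          (((∫ x, h x ∂ρ : ℝ) : EReal) - klDiv' ρ lam) := by
  change ((∫ x, h x ∂lam.tilted h : ℝ) : EReal) - klDiv' (lam.tilted h) lam = _
  obtain ⟨M, hM⟩ := hbdd
  have h_tilted := integrable_tilted_self_of_ae_le hint hM
  have hvalue : ((∫ x, h x ∂lam.tilted h : ℝ) : EReal) - klDiv' (lam.tilted h) lam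
      = ((log (∫ x, exp (h x) ∂lam) : ℝ) : EReal) := by
    rw [klDiv'_tilted_self hint h_tilted, ← EReal.coe_sub, sub_sub_cancel]
  refine le_antisymm ?_ ?_
  · have := isProbabilityMeasure_tilted hint
    exact le_iSup_of_le (lam.tilted h) (le_iSup_of_le this (le_iSup_of_le h_tilted le_rfl))
  · rw [hvalue]
    exact iSup₂_le fun ρ _ ↦ iSup_le (integral_sub_klDiv'_le_log_integral_exp hint ρ)

/-- If `h` is bounded above on the support of `λ`, the supremum in the Donsker–Varadhan
formula is attained by the Gibbs measure `λ_h` with density `e^h / ∫ e^h dλ` w.r.t. `λ`. -/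
theorem donsker_varadhan_attained {E : Type*} [MeasurableSpace E]
    (lam : Measure E) [IsProbabilityMeasure lam]
    (h : E → ℝ) (hmeas : Measurable h)
    (hint : Integrable (fun x => Real.exp (h x)) lam)
    (hbdd : ∃ M : ℝ, ∀ᵐ x ∂lam, h x ≤ M) :
    let lamh : Measure E :=
      lam.withDensity (fun x => ENNReal.ofReal (Real.exp (h x) / ∫ y, Real.exp (h y) ∂lam))
    (((∫ x, h x ∂lamh : ℝ) : EReal) - klDiv' lamh lam)
      = ⨆ (ρ : Measure E) (_ : IsProbabilityMeasure ρ) (_ : Integrable h ρ),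
          (((∫ x, h x ∂ρ : ℝ) : EReal) - klDiv' ρ lam) :=
  donsker_varadhan_attained_general lam h hint hbdd
end

section
/- For any K ≥ 2 and n ≥ 2, set r = 4 log(nK)/n and let π_p be the Dirichlet distribution D_K(α_1,...,α_K) on the (K−1)-simplex with 2/K ≤ α_j ≤ 1 for all j. Then for any probability vector p⁰ in the simplex, π_p({p : KL(p⁰, p) ≤ K r}) ≥ e^{−nKr}. -/
/-!
Put `ε = x / (1 + x)` with `x = K r`, so that `1 - ε ≥ e^{-x}`, and look at the box of side
`δ = ε / 2K` (in the free coordinates `p₁,…,p_{K-1}`) just below the mixture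
`(1 - ε) p⁰ + ε / K`. Every `p` in it has `pⱼ ≥ (1 - ε) p⁰ⱼ + δ ≥ e^{-x} p⁰ⱼ`, hence lies in the
KL-ball of radius `x`. On the box the Dirichlet density is at least `(2/K)^K`: each factor
`pⱼ^{αⱼ-1}` is `≥ 1` as `αⱼ ≤ 1`, `Γ(∑ α) ≥ 1` as `∑ α ≥ 2`, and `Γ(αⱼ) = Γ(αⱼ + 1)/αⱼ ≤ K/2`.
So the mass is at least `(2/K)^K δ^{K-1}`, and both `2/K` and `δ` are at least `(nK)^{-2}`,
giving `(nK)^{-4K} = e^{-nKr}`.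
-/

open MeasureTheory Real
open scoped BigOperators ENNReal

/-- Extend a vector `q` of the first `K−1` coordinates of a point of the simplex to a full
vector in `ℝ^K`, the last coordinate being `1 − ∑ q j`. -/
noncomputable def extSimplex (K : ℕ) (q : Fin (K - 1) → ℝ) (i : Fin K) : ℝ :=
  if h : (i : ℕ) < K - 1 then q ⟨i, h⟩ else 1 - ∑ j, q j

namespace Real

lemma Gamma_le_one_of_mem_Icc {y : ℝ} (h1 : 1 ≤ y) (h2 : y ≤ 2) : Gamma y ≤ 1 := by
  have h := convexOn_Gamma.2 (Set.mem_Ioi.mpr one_pos) (Set.mem_Ioi.mpr two_pos)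
    (show (0 : ℝ) ≤ 2 - y by linarith) (show (0 : ℝ) ≤ y - 1 by linarith) (by ring)
  simp only [smul_eq_mul, Gamma_one, Gamma_two] at h
  have hy : (2 - y) * 1 + (y - 1) * 2 = y := by ring
  rw [hy] at h
  linarith

lemma one_le_Gamma_of_two_le {y : ℝ} (h : 2 ≤ y) : 1 ≤ Gamma y :=
  Gamma_two ▸ Gamma_strictMonoOn_Ici.monotoneOn Set.self_mem_Ici h h

lemma mul_Gamma_le_one {a : ℝ} (ha : 0 < a) (ha1 : a ≤ 1) : a * Gamma a ≤ 1 := by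
  rw [← Gamma_add_one ha.ne']
  exact Gamma_le_one_of_mem_Icc (by linarith) (by linarith)

lemma exp_neg_le_one_sub_div_one_add {x : ℝ} (hx : 0 ≤ x) : exp (-x) ≤ 1 - x / (1 + x) := by
  have h : 1 - x / (1 + x) = (1 + x)⁻¹ := by field_simp; ring
  rw [h, exp_neg]
  exact inv_anti₀ (by linarith) (by linarith [add_one_le_exp x])

end Real

lemma pow_card_le_Gamma_sum_div_prod_Gamma {ι : Type*} [Fintype ι] {α : ι → ℝ} {c : ℝ}
    (hc : 0 < c) (hcα : ∀ j, c ≤ α j) (hα1 : ∀ j, α j ≤ 1) (hsum : 2 ≤ ∑ j, α j) :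
    c ^ Fintype.card ι ≤ Gamma (∑ j, α j) / ∏ j, Gamma (α j) := by
  have hα : ∀ j, 0 < α j := fun j => hc.trans_le (hcα j)
  rw [le_div_iff₀ (Finset.prod_pos fun j _ => Gamma_pos_of_pos (hα j))]
  calc c ^ Fintype.card ι * ∏ j, Gamma (α j) = ∏ j, c * Gamma (α j) := by
        rw [Finset.prod_mul_distrib, Finset.prod_const, Finset.card_univ]
    _ ≤ 1 := Finset.prod_le_one (fun j _ => by have := Gamma_pos_of_pos (hα j); positivity)
        fun j _ => (mul_le_mul_of_nonneg_right (hcα j) (Gamma_pos_of_pos (hα j)).le).trans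
          (mul_Gamma_le_one (hα j) (hα1 j))
    _ ≤ Gamma (∑ j, α j) := one_le_Gamma_of_two_le hsum

lemma one_le_prod_rpow_sub_one {ι : Type*} [Fintype ι] {p α : ι → ℝ}
    (hp : ∀ i, 0 < p i) (hp1 : ∀ i, p i ≤ 1) (hα1 : ∀ i, α i ≤ 1) :
    1 ≤ ∏ i, p i ^ (α i - 1) :=
  Finset.one_le_prod fun i _ =>
    one_le_rpow_of_pos_of_le_one_of_nonpos (hp i) (hp1 i) (by linarith [hα1 i])

noncomputable def discreteKLDiv {ι : Type*} [Fintype ι] (p0 p : ι → ℝ) : ℝ :=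
  ∑ j, p0 j * log (p0 j / p j)

lemma discreteKLDiv_le_of_exp_neg_mul_le {ι : Type*} [Fintype ι] {p0 p : ι → ℝ} {x : ℝ}
    (hp0 : ∀ j, 0 ≤ p0 j) (hp0s : ∑ j, p0 j = 1) (hp : ∀ j, 0 < p j)
    (hratio : ∀ j, exp (-x) * p0 j ≤ p j) :
    discreteKLDiv p0 p ≤ x := by
  have hterm : ∀ j, p0 j * log (p0 j / p j) ≤ p0 j * x := fun j => by
    rcases (hp0 j).eq_or_lt with h0 | h0
    · simp [← h0]
    refine mul_le_mul_of_nonneg_left ?_ h0.le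
    rw [log_le_iff_le_exp (div_pos h0 (hp j)), div_le_iff₀ (hp j)]
    calc p0 j = exp x * (exp (-x) * p0 j) := by rw [← mul_assoc, ← exp_add]; simp
      _ ≤ exp x * p j := by gcongr; exact hratio j
  calc discreteKLDiv p0 p ≤ ∑ j, p0 j * x := Finset.sum_le_sum fun j _ => hterm j
    _ = x := by rw [← Finset.sum_mul, hp0s, one_mul]

section extSimplex

variable {K' : ℕ}

lemma extSimplex_castSucc (q : Fin K' → ℝ) (j : Fin K') :
    extSimplex (K' + 1) q (Fin.castSucc j) = q j := by
  simp [extSimplex]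

lemma extSimplex_last (q : Fin K' → ℝ) :
    extSimplex (K' + 1) q (Fin.last K') = 1 - ∑ j, q j := by
  simp [extSimplex]

lemma sum_extSimplex (q : Fin K' → ℝ) : ∑ i, extSimplex (K' + 1) q i = 1 := by
  simp only [Fin.sum_univ_castSucc, extSimplex_castSucc, extSimplex_last]
  ring

lemma extSimplex_le_one {q : Fin K' → ℝ} (hq : ∀ i, 0 ≤ extSimplex (K' + 1) q i)
    (i : Fin (K' + 1)) : extSimplex (K' + 1) q i ≤ 1 :=
  sum_extSimplex q ▸ Finset.single_le_sum (fun j _ => hq j) (Finset.mem_univ i)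

def simplexKLBall (p0 : Fin (K' + 1) → ℝ) (x : ℝ) : Set (Fin K' → ℝ) :=
  {q | (∀ i, 0 ≤ extSimplex (K' + 1) q i) ∧ discreteKLDiv p0 (extSimplex (K' + 1) q) ≤ x}

/-- On this box the last coordinate `1 - ∑ qⱼ` can only be larger than `pt_K`. -/
def simplexBox (pt : Fin (K' + 1) → ℝ) (δ : ℝ) : Set (Fin K' → ℝ) :=
  Set.univ.pi fun j => Set.Icc (pt j.castSucc - δ) (pt j.castSucc)

lemma measurableSet_simplexBox (pt : Fin (K' + 1) → ℝ) (δ : ℝ) :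
    MeasurableSet (simplexBox pt δ) :=
  MeasurableSet.univ_pi fun _ => measurableSet_Icc

lemma volume_simplexBox (pt : Fin (K' + 1) → ℝ) (δ : ℝ) :
    volume (simplexBox pt δ) = ENNReal.ofReal δ ^ K' := by
  rw [simplexBox, volume_pi_pi]
  simp

lemma sub_le_extSimplex_of_mem_simplexBox {pt : Fin (K' + 1) → ℝ} {δ : ℝ} (hδ : 0 ≤ δ)
    (hpt : ∑ i, pt i = 1) {q : Fin K' → ℝ} (hq : q ∈ simplexBox pt δ) (i : Fin (K' + 1)) :
    pt i - δ ≤ extSimplex (K' + 1) q i := by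
  have hq' : ∀ j, q j ∈ Set.Icc (pt j.castSucc - δ) (pt j.castSucc) :=
    fun j => hq j (Set.mem_univ j)
  induction i using Fin.lastCases with
  | last =>
    rw [Fin.sum_univ_castSucc] at hpt
    have := Finset.sum_le_sum fun j (_ : j ∈ Finset.univ) => (hq' j).2
    rw [extSimplex_last]
    linarith
  | cast j =>
    rw [extSimplex_castSucc]
    exact (hq' j).1

end extSimplex

noncomputable def dirichletDensity {K : ℕ} (α p : Fin K → ℝ) : ℝ :=
  (Gamma (∑ j, α j) / ∏ j, Gamma (α j)) * ∏ i, p i ^ (α i - 1)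

lemma pow_le_dirichletDensity {K : ℕ} (hK : K ≠ 0) {α p : Fin K → ℝ}
    (hα : ∀ j, 2 / (K : ℝ) ≤ α j ∧ α j ≤ 1) (hp : ∀ i, 0 < p i) (hp1 : ∀ i, p i ≤ 1) :
    (2 / (K : ℝ)) ^ K ≤ dirichletDensity α p := by
  have hsum : 2 ≤ ∑ j, α j := by
    calc (2 : ℝ) = ∑ _j : Fin K, 2 / (K : ℝ) := by simp [field]
      _ ≤ ∑ j, α j := Finset.sum_le_sum fun j _ => (hα j).1
  have hconst := pow_card_le_Gamma_sum_div_prod_Gamma (by positivity) (fun j => (hα j).1)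
    (fun j => (hα j).2) hsum
  rw [Fintype.card_fin] at hconst
  exact hconst.trans <| le_mul_of_one_le_right ((pow_pos (by positivity) _).le.trans hconst)
    (one_le_prod_rpow_sub_one hp hp1 fun i => (hα i).2)

section mixture

variable {K' : ℕ} {p0 : Fin (K' + 1) → ℝ} {ε : ℝ}

local notation "K" => ((K' + 1 : ℕ) : ℝ)

def mixtureBox (p0 : Fin (K' + 1) → ℝ) (ε : ℝ) : Set (Fin K' → ℝ) :=
  simplexBox (fun i => (1 - ε) * p0 i + ε / K) (ε / (2 * K))

lemma le_extSimplex_of_mem_mixtureBox (hp0s : ∑ j, p0 j = 1) (hε : 0 ≤ ε)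
    {q : Fin K' → ℝ} (hq : q ∈ mixtureBox p0 ε) (i : Fin (K' + 1)) :
    (1 - ε) * p0 i + ε / (2 * K) ≤ extSimplex (K' + 1) q i := by
  have hpt : ∑ i, ((1 - ε) * p0 i + ε / K) = 1 := by
    rw [Finset.sum_add_distrib, ← Finset.mul_sum, hp0s, Finset.sum_const, Finset.card_univ,
      Fintype.card_fin, nsmul_eq_mul]
    field_simp
    ring
  calc (1 - ε) * p0 i + ε / (2 * K) = (1 - ε) * p0 i + ε / K - ε / (2 * K) := by
        field_simp; ring
    _ ≤ _ := sub_le_extSimplex_of_mem_simplexBox (by positivity) hpt hq i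

lemma exp_neg_mul_lt_extSimplex_of_mem_mixtureBox (hp0 : ∀ j, 0 ≤ p0 j) (hp0s : ∑ j, p0 j = 1)
    (hε : 0 < ε) {x : ℝ} (hεx : exp (-x) ≤ 1 - ε)
    {q : Fin K' → ℝ} (hq : q ∈ mixtureBox p0 ε) (i : Fin (K' + 1)) :
    exp (-x) * p0 i < extSimplex (K' + 1) q i :=
  calc exp (-x) * p0 i < (1 - ε) * p0 i + ε / (2 * K) := by
        have := mul_le_mul_of_nonneg_right hεx (hp0 i)
        have : 0 < ε / (2 * K) := by positivity
        linarith
    _ ≤ extSimplex (K' + 1) q i := le_extSimplex_of_mem_mixtureBox hp0s hε.le hq i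

lemma extSimplex_pos_of_mem_mixtureBox (hp0 : ∀ j, 0 ≤ p0 j) (hp0s : ∑ j, p0 j = 1)
    (hε : 0 < ε) {x : ℝ} (hεx : exp (-x) ≤ 1 - ε)
    {q : Fin K' → ℝ} (hq : q ∈ mixtureBox p0 ε) (i : Fin (K' + 1)) :
    0 < extSimplex (K' + 1) q i :=
  (mul_nonneg (exp_pos (-x)).le (hp0 i)).trans_lt
    (exp_neg_mul_lt_extSimplex_of_mem_mixtureBox hp0 hp0s hε hεx hq i)

lemma mixtureBox_subset_simplexKLBall (hp0 : ∀ j, 0 ≤ p0 j) (hp0s : ∑ j, p0 j = 1)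
    (hε : 0 < ε) {x : ℝ} (hεx : exp (-x) ≤ 1 - ε) :
    mixtureBox p0 ε ⊆ simplexKLBall p0 x := fun _ hq =>
  ⟨fun i => (extSimplex_pos_of_mem_mixtureBox hp0 hp0s hε hεx hq i).le,
    discreteKLDiv_le_of_exp_neg_mul_le hp0 hp0s
      (extSimplex_pos_of_mem_mixtureBox hp0 hp0s hε hεx hq)
      fun i => (exp_neg_mul_lt_extSimplex_of_mem_mixtureBox hp0 hp0s hε hεx hq i).le⟩

theorem le_setLIntegral_simplexKLBall_dirichletDensity (hp0 : ∀ j, 0 ≤ p0 j) (hp0s : ∑ j, p0 j = 1)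
    (hε : 0 < ε) {x : ℝ} (hεx : exp (-x) ≤ 1 - ε)
    {α : Fin (K' + 1) → ℝ} (hα : ∀ j, 2 / K ≤ α j ∧ α j ≤ 1) :
    ENNReal.ofReal ((2 / K) ^ (K' + 1) * (ε / (2 * K)) ^ K')
      ≤ ∫⁻ q in simplexKLBall p0 x,
          ENNReal.ofReal (dirichletDensity α (extSimplex (K' + 1) q)) := by
  have hdens : ∀ q ∈ mixtureBox p0 ε,
      (2 / K) ^ (K' + 1) ≤ dirichletDensity α (extSimplex (K' + 1) q) := fun q hq =>
    have hpos := extSimplex_pos_of_mem_mixtureBox hp0 hp0s hε hεx hq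
    pow_le_dirichletDensity (Nat.succ_ne_zero K') hα hpos (extSimplex_le_one fun i => (hpos i).le)
  calc ENNReal.ofReal ((2 / K) ^ (K' + 1) * (ε / (2 * K)) ^ K')
      = ∫⁻ _ in mixtureBox p0 ε, ENNReal.ofReal ((2 / K) ^ (K' + 1)) := by
        rw [setLIntegral_const, mixtureBox, volume_simplexBox,
          ← ENNReal.ofReal_pow (by positivity), ← ENNReal.ofReal_mul (by positivity)]
    _ ≤ ∫⁻ q in mixtureBox p0 ε, ENNReal.ofReal (dirichletDensity α (extSimplex (K' + 1) q)) :=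
        setLIntegral_mono' (measurableSet_simplexBox _ _)
          fun q hq => ENNReal.ofReal_le_ofReal (hdens q hq)
    _ ≤ _ := lintegral_mono_set (mixtureBox_subset_simplexKLBall hp0 hp0s hε hεx)

end mixture

lemma pow_four_mul_succ_le_pow_mul_pow {t a b : ℝ} (k : ℕ) (ht0 : 0 ≤ t) (ht1 : t ≤ 1)
    (ha : t ≤ a) (hb : t ^ 2 ≤ b) : t ^ (4 * (k + 1)) ≤ a ^ (k + 1) * b ^ k :=
  calc t ^ (4 * (k + 1)) ≤ t ^ ((k + 1) + 2 * k) := pow_le_pow_of_le_one ht0 ht1 (by omega)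
    _ = t ^ (k + 1) * (t ^ 2) ^ k := by rw [pow_add, pow_mul]
    _ ≤ a ^ (k + 1) * b ^ k := by have := ht0.trans ha; gcongr

lemma inv_sq_le_div_one_add_div {n K x : ℝ} (hn : 2 ≤ n) (hK : 2 ≤ K) (hx : 4 * K / n ≤ x) :
    ((n * K)⁻¹) ^ 2 ≤ x / (1 + x) / (2 * K) := by
  have hx0 : 0 < 4 * K / n := by positivity
  have hmono : 4 * K / n / (1 + 4 * K / n) ≤ x / (1 + x) := by
    rw [div_le_div_iff₀ (by positivity) (by linarith)]
    nlinarith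
  refine le_trans ?_ (div_le_div_of_nonneg_right hmono (by positivity))
  rw [show 4 * K / n / (1 + 4 * K / n) / (2 * K) = 2 / (n + 4 * K) by field_simp; ring,
    inv_pow, inv_le_comm₀ (by positivity) (by positivity), inv_div,
    div_le_iff₀ (by norm_num : (0 : ℝ) < 2)]
  nlinarith [mul_le_mul hn hK (by norm_num) (by linarith)]

/-- Prior-mass lower bound for Dirichlet priors on KL-balls: for `r = 4 log(nK)/n` and a
Dirichlet prior `D_K(α₁,...,α_K)` with `2/K ≤ α_j ≤ 1`, the Dirichlet mass of the KL-ball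
`{p : KL(p⁰,p) ≤ Kr}` around any probability vector `p⁰` is at least `e^{−nKr}`. The
Dirichlet distribution is expressed through its density
`Γ(∑α)/∏Γ(αⱼ) · ∏ pⱼ^{αⱼ−1}` in the coordinates `p₁,...,p_{K−1}`. -/
theorem dirichlet_mass_kl_ball (K n : ℕ) (hK : 2 ≤ K) (hn : 2 ≤ n)
    (α : Fin K → ℝ) (hα : ∀ j, 2 / (K : ℝ) ≤ α j ∧ α j ≤ 1)
    (p0 : Fin K → ℝ) (hp0 : ∀ j, 0 ≤ p0 j) (hp0s : ∑ j, p0 j = 1) :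
    ENNReal.ofReal (Real.exp (-(n * K * (4 * Real.log (n * K) / n))))
      ≤ ∫⁻ q in {q : Fin (K - 1) → ℝ |
            (∀ i : Fin K, 0 ≤ extSimplex K q i) ∧
            ∑ j, p0 j * Real.log (p0 j / extSimplex K q j)
              ≤ K * (4 * Real.log (n * K) / n)},
          ENNReal.ofReal ((Real.Gamma (∑ j, α j) / ∏ j, Real.Gamma (α j)) *
            ∏ i, (extSimplex K q i) ^ (α i - 1)) := by
  obtain ⟨K', rfl⟩ : ∃ K', K = K' + 1 := ⟨K - 1, by omega⟩
  set k : ℝ := ((K' + 1 : ℕ) : ℝ)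
  have hnR : (2 : ℝ) ≤ n := by exact_mod_cast hn
  have hkR : 2 ≤ k := show (2 : ℝ) ≤ (K' + 1 : ℕ) by exact_mod_cast hK
  have hlog : 1 ≤ log (n * k) := by
    rw [le_log_iff_exp_le (by positivity)]
    nlinarith [exp_one_lt_d9]
  set x : ℝ := k * (4 * log (n * k) / n)
  have hx : 4 * k / n ≤ x := by
    rw [show x = 4 * k * log (n * k) / n by ring, div_le_div_iff_of_pos_right (by positivity)]
    nlinarith
  have hexp : exp (-(n * k * (4 * log (n * k) / n))) = ((n * k)⁻¹) ^ (4 * (K' + 1)) := by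
    rw [← exp_log (show 0 < (n * k)⁻¹ by positivity), ← exp_nat_mul, log_inv]
    field_simp
    push_cast [k]
    ring_nf
  have hMinv : (n * k)⁻¹ ≤ 2 / k := by
    rw [inv_le_comm₀ (by positivity) (by positivity), inv_div, div_le_iff₀ (by norm_num)]
    nlinarith
  calc ENNReal.ofReal (exp (-(n * k * (4 * log (n * k) / n))))
      ≤ ENNReal.ofReal ((2 / k) ^ (K' + 1) * (x / (1 + x) / (2 * k)) ^ K') :=
        ENNReal.ofReal_le_ofReal <| hexp ▸ pow_four_mul_succ_le_pow_mul_pow K' (by positivity)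
          (inv_le_one_of_one_le₀ (by nlinarith)) hMinv (inv_sq_le_div_one_add_div hnR hkR hx)
    _ ≤ _ := le_setLIntegral_simplexKLBall_dirichletDensity hp0 hp0s (by positivity)
        (exp_neg_le_one_sub_div_one_add (by positivity)) hα
end

section
/- For every real t > 0, log(t) − 1/(2t) − 1/(12t²) < ψ(t) < log(t) − 1/(2t) − 1/(12t²) + 1/(120t⁴), where ψ is the digamma function. -/
/-- The digamma function `ψ = (log Γ)'`. -/
noncomputable def digamma (x : ℝ) : ℝ := deriv (fun t => Real.log (Real.Gamma t)) x

/-!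
Let `g x = log x - 1 / (2 * x) - 1 / (12 * x ^ 2)` and `F = ψ - g`. Convexity of `log ∘ Γ`, whose
slope on `[x, x + 1]` is `log x`, traps `ψ x` between `log x - 1 / x` and `log x`, so `F → 0` at
infinity; the functional equation `ψ (x + 1) = ψ x + 1 / x` turns `F x - F (x + 1)` into the defect
`h x = g (x + 1) - g x - 1 / x`, a purely elementary function. Differentiating shows
`0 < h x < u x - u (x + 1)` with `u x = 1 / (120 * x ^ 4)`, and a function that strictly decreases
under `x ↦ x + 1` and tends to `0` is positive: apply this to `F` and to `u - F`.
-/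

open Real Filter Topology Set

section LogGamma

variable {x : ℝ}

lemma differentiableAt_log_Gamma (hx : 0 < x) :
    DifferentiableAt ℝ (fun t => log (Gamma t)) x := by
  have hx' : ∀ m : ℕ, x ≠ -m := fun m => by linarith [(m.cast_nonneg : (0 : ℝ) ≤ m)]
  exact (differentiableAt_Gamma hx').log (Gamma_ne_zero hx')

lemma log_Gamma_add_one (hx : 0 < x) : log (Gamma (x + 1)) = log (Gamma x) + log x := by
  rw [Gamma_add_one hx.ne', log_mul hx.ne' (Gamma_pos_of_pos hx).ne', add_comm]

lemma digamma_add_one (hx : 0 < x) : digamma (x + 1) = digamma x + x⁻¹ := by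
  unfold digamma
  rw [← deriv_comp_add_const, ← deriv_log,
    ← deriv_add (differentiableAt_log_Gamma hx) (differentiableAt_log hx.ne')]
  refine EventuallyEq.deriv_eq ?_
  filter_upwards [eventually_gt_nhds hx] with y hy
  exact log_Gamma_add_one hy

lemma slope_log_Gamma (hx : 0 < x) : slope (log ∘ Gamma) x (x + 1) = log x := by
  rw [slope_def_field, Function.comp_apply, Function.comp_apply, log_Gamma_add_one hx]
  ring

lemma digamma_le_log (hx : 0 < x) : digamma x ≤ log x :=
  (convexOn_log_Gamma.deriv_le_slope hx (show (0 : ℝ) < x + 1 by linarith) (lt_add_one x)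
    (differentiableAt_log_Gamma hx)).trans_eq (slope_log_Gamma hx)

lemma log_le_digamma_add_one (hx : 0 < x) : log x ≤ digamma (x + 1) :=
  (slope_log_Gamma hx).symm.trans_le <| convexOn_log_Gamma.slope_le_deriv hx
    (show (0 : ℝ) < x + 1 by linarith) (lt_add_one x) (differentiableAt_log_Gamma (by linarith))

lemma log_sub_inv_le_digamma (hx : 0 < x) : log x - x⁻¹ ≤ digamma x := by
  linarith [log_le_digamma_add_one hx, digamma_add_one hx]

end LogGamma

lemma tendsto_digamma_sub_log : Tendsto (fun x => digamma x - log x) atTop (𝓝 0) := by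
  have hinv : Tendsto (fun x : ℝ => -x⁻¹) atTop (𝓝 0) := by
    simpa using (tendsto_inv_atTop_zero (𝕜 := ℝ)).neg
  refine tendsto_of_tendsto_of_tendsto_of_le_of_le' hinv tendsto_const_nhds ?_ ?_ <;>
    filter_upwards [eventually_gt_atTop 0] with x hx
  · linarith [log_sub_inv_le_digamma hx]
  · linarith [digamma_le_log hx]

lemma tendsto_one_div_mul_pow_atTop {c : ℝ} (hc : 0 < c) {k : ℕ} (hk : k ≠ 0) :
    Tendsto (fun x : ℝ => 1 / (c * x ^ k)) atTop (𝓝 0) := by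
  simpa only [one_div, Function.comp_def] using
    tendsto_inv_atTop_zero.comp ((tendsto_pow_atTop hk).const_mul_atTop hc)

lemma pos_of_forall_lt_of_tendsto {F : ℝ → ℝ} {a x : ℝ} (hF : ∀ y, a < y → F (y + 1) < F y)
    (hlim : Tendsto F atTop (𝓝 0)) (hx : a < x) : 0 < F x := by
  have hanti : StrictAnti fun n : ℕ => F (x + n) := strictAnti_nat_of_succ_lt fun n => by
    simpa [add_assoc] using hF (x + n) (hx.trans_le (le_add_of_nonneg_right n.cast_nonneg))
  have htend : Tendsto (fun n : ℕ => F (x + n)) atTop (𝓝 0) :=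
    hlim.comp (tendsto_atTop_add_const_left _ x tendsto_natCast_atTop_atTop)
  simpa using (hanti.antitone.le_of_tendsto htend 1).trans_lt (hanti zero_lt_one)

lemma pos_of_hasDerivAt_neg_of_tendsto {f f' : ℝ → ℝ} {a x : ℝ}
    (hf : ∀ y, a < y → HasDerivAt f (f' y) y) (hf' : ∀ y, a < y → f' y < 0)
    (hlim : Tendsto f atTop (𝓝 0)) (hx : a < x) : 0 < f x := by
  have hanti : StrictAntiOn f (Ioi a) := strictAntiOn_of_deriv_neg (convex_Ioi a)
    (fun y hy => (hf y hy).continuousAt.continuousWithinAt)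
    (fun y hy => by rw [interior_Ioi] at hy; rw [(hf y hy).deriv]; exact hf' y hy)
  exact pos_of_forall_lt_of_tendsto
    (fun y hy => hanti hy (mem_Ioi.mpr (by linarith)) (lt_add_one y)) hlim hx

noncomputable def digammaApprox (x : ℝ) : ℝ := log x - 1 / (2 * x) - 1 / (12 * x ^ 2)

noncomputable def digammaApproxDefect (x : ℝ) : ℝ := digammaApprox (x + 1) - digammaApprox x - x⁻¹

section Elementary

variable {x : ℝ}

lemma hasDerivAt_digammaApprox (hx : x ≠ 0) :
    HasDerivAt digammaApprox (x⁻¹ + 1 / (2 * x ^ 2) + 1 / (6 * x ^ 3)) x := by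
  have h2 := (hasDerivAt_const x (1 : ℝ)).div ((hasDerivAt_id x).const_mul 2)
    (mul_ne_zero two_ne_zero hx)
  have h12 := (hasDerivAt_const x (1 : ℝ)).div ((hasDerivAt_pow 2 x).const_mul 12)
    (by positivity)
  refine (((hasDerivAt_log hx).sub h2).sub h12).congr_deriv ?_
  simp only [id]
  field_simp
  ring

lemma hasDerivAt_digammaApproxDefect (hx : 0 < x) :
    HasDerivAt digammaApproxDefect (-(1 / (6 * x ^ 3 * (x + 1) ^ 3))) x := by
  have h1 : x + 1 ≠ 0 := by positivity
  have := (((hasDerivAt_digammaApprox h1).comp_add_const x 1).sub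
    (hasDerivAt_digammaApprox hx.ne')).sub (hasDerivAt_inv hx.ne')
  refine this.congr_deriv ?_
  field_simp
  ring

lemma hasDerivAt_one_div_mul_pow_four (hx : x ≠ 0) :
    HasDerivAt (fun y : ℝ => 1 / (120 * y ^ 4)) (-(1 / (30 * x ^ 5))) x := by
  refine ((hasDerivAt_const x (1 : ℝ)).div ((hasDerivAt_pow 4 x).const_mul 120)
    (by positivity)).congr_deriv ?_
  field_simp
  ring

lemma digamma_sub_digammaApprox_sub_shift (hx : 0 < x) :
    (digamma x - digammaApprox x) - (digamma (x + 1) - digammaApprox (x + 1)) =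
      digammaApproxDefect x := by
  rw [digamma_add_one hx, digammaApproxDefect]
  ring

end Elementary

lemma tendsto_digamma_sub_digammaApprox :
    Tendsto (fun x => digamma x - digammaApprox x) atTop (𝓝 0) := by
  have h2 : Tendsto (fun x : ℝ => 1 / (2 * x)) atTop (𝓝 0) := by
    simpa using tendsto_one_div_mul_pow_atTop two_pos one_ne_zero
  simpa [digammaApprox, sub_add] using
    (tendsto_digamma_sub_log.add h2).add (tendsto_one_div_mul_pow_atTop (by norm_num) two_ne_zero)

lemma tendsto_digammaApproxDefect : Tendsto digammaApproxDefect atTop (𝓝 0) := by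
  have hshift := tendsto_digamma_sub_digammaApprox.comp
    (tendsto_atTop_add_const_right _ 1 tendsto_id)
  have h := tendsto_digamma_sub_digammaApprox.sub hshift
  rw [sub_zero] at h
  refine h.congr' ?_
  filter_upwards [eventually_gt_atTop 0] with x hx
  exact digamma_sub_digammaApprox_sub_shift hx

lemma digammaApproxDefect_pos {x : ℝ} (hx : 0 < x) : 0 < digammaApproxDefect x :=
  pos_of_hasDerivAt_neg_of_tendsto (fun _ hy => hasDerivAt_digammaApproxDefect hy)
    (fun y hy => by simp only [Left.neg_neg_iff]; positivity) tendsto_digammaApproxDefect hx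

lemma digammaApproxDefect_lt {x : ℝ} (hx : 0 < x) :
    digammaApproxDefect x < 1 / (120 * x ^ 4) - 1 / (120 * (x + 1) ^ 4) := by
  have hderiv (y : ℝ) (hy : 0 < y) : HasDerivAt
      (fun y => 1 / (120 * y ^ 4) - 1 / (120 * (y + 1) ^ 4) - digammaApproxDefect y)
      (-((5 * y ^ 2 + 5 * y + 1) / (30 * y ^ 5 * (y + 1) ^ 5))) y := by
    have hy1 : y + 1 ≠ 0 := by positivity
    refine (((hasDerivAt_one_div_mul_pow_four hy.ne').sub
      ((hasDerivAt_one_div_mul_pow_four hy1).comp_add_const y 1)).sub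
      (hasDerivAt_digammaApproxDefect hy)).congr_deriv ?_
    field_simp
    ring
  have hu : Tendsto (fun y : ℝ => 1 / (120 * y ^ 4)) atTop (𝓝 0) :=
    tendsto_one_div_mul_pow_atTop (by norm_num) four_ne_zero
  have hlim : Tendsto
      (fun y => 1 / (120 * y ^ 4) - 1 / (120 * (y + 1) ^ 4) - digammaApproxDefect y)
      atTop (𝓝 0) := by
    simpa using (hu.sub (hu.comp
      (tendsto_atTop_add_const_right _ 1 tendsto_id))).sub tendsto_digammaApproxDefect
  have := pos_of_hasDerivAt_neg_of_tendsto hderiv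
    (fun y hy => by simp only [Left.neg_neg_iff]; positivity) hlim hx
  linarith

theorem digammaApprox_lt_digamma {x : ℝ} (hx : 0 < x) : digammaApprox x < digamma x :=
  sub_pos.mp <| pos_of_forall_lt_of_tendsto (F := fun y => digamma y - digammaApprox y)
    (fun y hy => by linarith [digamma_sub_digammaApprox_sub_shift hy, digammaApproxDefect_pos hy])
    tendsto_digamma_sub_digammaApprox hx

theorem digamma_lt_digammaApprox_add {x : ℝ} (hx : 0 < x) :
    digamma x < digammaApprox x + 1 / (120 * x ^ 4) := by
  have hu : Tendsto (fun y : ℝ => 1 / (120 * y ^ 4)) atTop (𝓝 0) :=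
    tendsto_one_div_mul_pow_atTop (by norm_num) four_ne_zero
  have hlim : Tendsto (fun y => 1 / (120 * y ^ 4) - (digamma y - digammaApprox y)) atTop (𝓝 0) := by
    simpa using hu.sub tendsto_digamma_sub_digammaApprox
  have := pos_of_forall_lt_of_tendsto (fun y hy => by
    linarith [digamma_sub_digammaApprox_sub_shift hy, digammaApproxDefect_lt hy]) hlim hx
  linarith

/-- Two-sided bounds on the digamma function: for every `t > 0`,
`log t − 1/(2t) − 1/(12t²) < ψ(t) < log t − 1/(2t) − 1/(12t²) + 1/(120t⁴)`. -/
theorem digamma_bounds (t : ℝ) (ht : 0 < t) :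
    Real.log t - 1 / (2 * t) - 1 / (12 * t ^ 2) < digamma t ∧
      digamma t < Real.log t - 1 / (2 * t) - 1 / (12 * t ^ 2) + 1 / (120 * t ^ 4) :=
  ⟨digammaApprox_lt_digamma ht, digamma_lt_digammaApprox_add ht⟩
end

section
/- Let p⁰ ∈ S_K be a probability vector with p⁰_K = max_j p⁰_j, let n ≥ 2, K ≥ 2, and let r > 0 satisfy Kr ≥ 1/(n−1). If p ∈ ℝ^K satisfies p⁰_j e^{−Kr} ≤ p_j ≤ p⁰_j e^{−Kr} + p⁰_K/(n(K−1)) for j = 1,...,K−1 and p_K = 1 − ∑_{j=1}^{K−1} p_j, then p is a probability vector (all coordinates nonnegative) and KL(p⁰, p) ≤ Kr. -/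
/-!
Since `1 + t ≤ eᵗ`, the condition `Kr ≥ 1/(n−1)` gives `e^{−Kr} ≤ (n−1)/n`. The coordinates
`p_j`, `j < K`, then add up to at most `(1 − p⁰_K) e^{−Kr} + p⁰_K/n`, which leaves
`p_K ≥ p⁰_K e^{−Kr}` as well. So `p ≥ p⁰ e^{−Kr}` coordinatewise: `p` is a probability vector and
every log-ratio `log (p⁰_j/p_j)` is at most `Kr`.
-/

open Finset Real

theorem Real.exp_neg_le_inv_one_add {t : ℝ} (ht : -1 < t) : exp (-t) ≤ (1 + t)⁻¹ := by
  rw [exp_neg]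
  exact inv_anti₀ (by linarith) (by linarith [add_one_le_exp t])

theorem Real.one_div_le_one_sub_exp_neg {m c : ℝ} (hm : 1 < m) (hc : 1 / (m - 1) ≤ c) :
    1 / m ≤ 1 - exp (-c) := by
  have hm1 : 0 < m - 1 := by linarith
  calc 1 / m = 1 - (1 + 1 / (m - 1))⁻¹ := by field_simp; ring
    _ ≤ 1 - exp (-(1 / (m - 1))) := by
      gcongr; exact exp_neg_le_inv_one_add (neg_one_lt_zero.trans (by positivity))
    _ ≤ 1 - exp (-c) := by gcongr

theorem Finset.sum_le_mul_add_of_le_mul_add_div_card {ι : Type*} {s : Finset ι}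
    (hs : s.Nonempty) {p q : ι → ℝ} {E a : ℝ} (h : ∀ j ∈ s, p j ≤ q j * E + a / #s) :
    ∑ j ∈ s, p j ≤ (∑ j ∈ s, q j) * E + a := by
  have hcard : (#s : ℝ) ≠ 0 := by exact_mod_cast hs.card_pos.ne'
  calc ∑ j ∈ s, p j ≤ ∑ j ∈ s, (q j * E + a / #s) := sum_le_sum h
    _ = (∑ j ∈ s, q j) * E + a := by
      rw [sum_add_distrib, ← sum_mul, sum_const, nsmul_eq_mul, mul_div_cancel₀ _ hcard]

theorem Real.mul_log_div_le_mul_of_mul_exp_neg_le {a b c : ℝ} (ha : 0 ≤ a)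
    (h : a * exp (-c) ≤ b) : a * log (a / b) ≤ a * c := by
  rcases ha.eq_or_lt with rfl | ha
  · simp
  have hb : 0 < b := lt_of_lt_of_le (by positivity) h
  gcongr
  rw [log_le_iff_le_exp (by positivity), div_le_iff₀ hb]
  calc a = a * exp (-c) * exp c := by rw [mul_assoc, ← exp_add, neg_add_cancel, exp_zero, mul_one]
    _ ≤ exp c * b := by rw [mul_comm (exp c)]; gcongr

theorem Real.sum_mul_log_div_le_of_mul_exp_neg_le {ι : Type*} [Fintype ι] {p q : ι → ℝ} {c : ℝ}
    (hp : ∀ j, 0 ≤ p j) (hp1 : ∑ j, p j = 1) (h : ∀ j, p j * exp (-c) ≤ q j) :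
    ∑ j, p j * log (p j / q j) ≤ c :=
  calc ∑ j, p j * log (p j / q j) ≤ ∑ j, p j * c :=
        sum_le_sum fun j _ => mul_log_div_le_mul_of_mul_exp_neg_le (hp j) (h j)
    _ = c := by rw [← sum_mul, hp1, one_mul]

theorem kl_ball_construction_general (K n : ℕ) (hK : 2 ≤ K) (hn : 2 ≤ n)
    (r : ℝ) (hKr : 1 / ((n : ℝ) - 1) ≤ K * r)
    (p0 : Fin K → ℝ) (hp0 : ∀ j, 0 ≤ p0 j) (hp0s : ∑ j, p0 j = 1)
    (last : Fin K)
    (p : Fin K → ℝ)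
    (hlb : ∀ j, j ≠ last → p0 j * Real.exp (-(K * r)) ≤ p j)
    (hub : ∀ j, j ≠ last →
      p j ≤ p0 j * Real.exp (-(K * r)) + p0 last / (n * ((K : ℝ) - 1)))
    (hplast : p last = 1 - ∑ j ∈ Finset.univ.erase last, p j) :
    (∀ j, 0 ≤ p j) ∧ ∑ j, p j = 1 ∧
      ∑ j, p0 j * Real.log (p0 j / p j) ≤ K * r := by
  set E := exp (-(K * r))
  have hn1 : (1 : ℝ) < n := by exact_mod_cast hn
  have hgap : 1 / (n : ℝ) ≤ 1 - E := one_div_le_one_sub_exp_neg hn1 hKr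
  have hcard : #(univ.erase last) = K - 1 := by
    rw [card_erase_of_mem (mem_univ _), card_univ, Fintype.card_fin]
  have hrest : ∑ j ∈ univ.erase last, p j ≤ (1 - p0 last) * E + p0 last / n := by
    have hp0rest := add_sum_erase univ p0 (mem_univ last)
    rw [show 1 - p0 last = ∑ j ∈ univ.erase last, p0 j by linarith]
    refine sum_le_mul_add_of_le_mul_add_div_card (card_pos.1 (by omega)) fun j hj => ?_
    rw [hcard, Nat.cast_pred (by omega), div_div]
    exact hub j (ne_of_mem_erase hj)
  have hp0last : p0 last ≤ 1 := hp0s ▸ single_le_sum (fun j _ => hp0 j) (mem_univ last)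
  have hdom : ∀ j, p0 j * E ≤ p j := by
    intro j
    by_cases hj : j = last
    · subst hj
      have : p0 j / n ≤ 1 / n := by gcongr
      nlinarith [hp0 j]
    · exact hlb j hj
  refine ⟨fun j => (mul_nonneg (hp0 j) (exp_pos _).le).trans (hdom j), ?_,
    sum_mul_log_div_le_of_mul_exp_neg_le hp0 hp0s hdom⟩
  rw [← add_sum_erase univ p (mem_univ last), hplast]
  ring

/-- If `p⁰ ∈ S_K` has its largest coordinate in the last position, `Kr ≥ 1/(n−1)` and `p`
satisfies `p⁰_j e^{−Kr} ≤ p_j ≤ p⁰_j e^{−Kr} + p⁰_K/(n(K−1))` for `j < K` with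
`p_K = 1 − ∑_{j<K} p_j`, then `p` is a probability vector and `KL(p⁰,p) ≤ Kr`. -/
theorem kl_ball_construction (K n : ℕ) (hK : 2 ≤ K) (hn : 2 ≤ n)
    (r : ℝ) (hr : 0 < r) (hKr : 1 / ((n : ℝ) - 1) ≤ K * r)
    (p0 : Fin K → ℝ) (hp0 : ∀ j, 0 ≤ p0 j) (hp0s : ∑ j, p0 j = 1)
    (last : Fin K) (hlast : (last : ℕ) = K - 1)
    (hmax : ∀ j, p0 j ≤ p0 last)
    (p : Fin K → ℝ)
    (hlb : ∀ j, j ≠ last → p0 j * Real.exp (-(K * r)) ≤ p j)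
    (hub : ∀ j, j ≠ last →
      p j ≤ p0 j * Real.exp (-(K * r)) + p0 last / (n * ((K : ℝ) - 1)))
    (hplast : p last = 1 - ∑ j ∈ Finset.univ.erase last, p j) :
    (∀ j, 0 ≤ p j) ∧ ∑ j, p j = 1 ∧
      ∑ j, p0 j * Real.log (p0 j / p j) ≤ K * r :=
  kl_ball_construction_general K n hK hn r hKr p0 hp0 hp0s last p hlb hub hplast
end
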